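/- arXiv:1902.08677 — 2 statements merged into one kernel-verified Lean document; each statement's English description precedes it below -/
import Mathlib

section
/- (Mathias) Every selective ideal is Ramsey: if an ideal I on ℕ containing all finite sets is both p⁺ and q⁺, then for every coloring c : [ℕ]² → {0,1} and every X ∈ I⁺ there is Y ∈ I⁺ with Y ⊆ X such that c is constant on [Y]². -/
open Set Filter Topology

def IsIdeal {X : Type*} (I : Set (Set X)) : Prop :=
  ∅ ∈ I ∧ (Set.univ : Set X) ∉ I ∧ (∀ A B : Set X, A ∈ I → B ∈ I → A ∪ B ∈ I) ∧
    ∀ A B : Set X, A ⊆ B → B ∈ I → A ∈ I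

def ContainsFin {X : Type*} (I : Set (Set X)) : Prop := ∀ A : Set X, A.Finite → A ∈ I

/-- `I` is p⁺: every decreasing sequence of `I`-positive sets has an `I`-positive
pseudo-intersection. -/
def Pplus (I : Set (Set ℕ)) : Prop :=
  ∀ A : ℕ → Set ℕ, (∀ n, A n ∉ I) → (∀ n, A (n + 1) ⊆ A n) →
    ∃ B : Set ℕ, B ∉ I ∧ ∀ n, (B \ A n).Finite

/-- `I` is q⁺: every partition of an `I`-positive set into finite pieces admits
an `I`-positive partial selector. -/
def Qplus (I : Set (Set ℕ)) : Prop :=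
  ∀ A : Set ℕ, A ∉ I → ∀ F : ℕ → Set ℕ, (∀ n, (F n).Finite) →
    (⋃ n, F n) = A → (∀ m n, m ≠ n → F m ∩ F n = ∅) →
    ∃ S : Set ℕ, S ∉ I ∧ S ⊆ A ∧ ∀ n, (S ∩ F n).Subsingleton

section MathiasAux

variable {I : Set (Set ℕ)}

lemma aux_subset (hI : IsIdeal I) {A B : Set ℕ} (h : A ⊆ B) (hB : B ∈ I) : A ∈ I :=
  hI.2.2.2 A B h hB

lemma aux_pos_union (hI : IsIdeal I) {A B C : Set ℕ} (hA : A ∉ I) (h : A ⊆ B ∪ C) :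
    B ∉ I ∨ C ∉ I := by
  by_contra hc
  simp only [not_or, not_not] at hc
  exact hA (aux_subset hI h (hI.2.2.1 _ _ hc.1 hc.2))

lemma aux_step (hI : IsIdeal I) (c : ℕ → ℕ → Bool) (A : Set ℕ) (n : ℕ) :
    ∃ (B : Set ℕ) (b : Bool), A ∉ I → B ∉ I ∧ B ⊆ A ∧ ∀ y ∈ B, c n y = b := by
  by_cases hA : A ∉ I
  · have h1 : {y ∈ A | c n y = true} ∉ I ∨ {y ∈ A | c n y = false} ∉ I := by
      apply aux_pos_union hI hA
      intro y hy
      cases h : c n y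
      · exact Or.inr ⟨hy, h⟩
      · exact Or.inl ⟨hy, h⟩
    rcases h1 with h | h
    · exact ⟨_, true, fun _ => ⟨h, fun y hy => hy.1, fun y hy => hy.2⟩⟩
    · exact ⟨_, false, fun _ => ⟨h, fun y hy => hy.1, fun y hy => hy.2⟩⟩
  · exact ⟨∅, true, fun h => (hA h).elim⟩

lemma aux_seq (hI : IsIdeal I) (c : ℕ → ℕ → Bool) {X : Set ℕ} (hX : X ∉ I) :
    ∃ (Y : ℕ → Set ℕ) (bcol : ℕ → Bool), Y 0 = X ∧ (∀ n, Y n ∉ I) ∧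
      (∀ n, Y (n + 1) ⊆ Y n) ∧ ∀ n, ∀ y ∈ Y (n + 1), c n y = bcol n := by
  choose Bf bf hBf using fun (A : Set ℕ) (n : ℕ) => aux_step hI c A n
  refine ⟨fun n => Nat.rec X (fun n A => Bf A n) n,
    fun n => bf (Nat.rec X (fun n A => Bf A n) n) n, rfl, ?_, ?_, ?_⟩
  · intro n
    induction n with
    | zero => exact hX
    | succ n ih => exact (hBf _ n ih).1
  · intro n
    have hpos : (Nat.rec X (fun n A => Bf A n) n : Set ℕ) ∉ I := by
      induction n with
      | zero => exact hX
      | succ n ih => exact (hBf _ n ih).1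
    exact (hBf _ n hpos).2.1
  · intro n
    have hpos : (Nat.rec X (fun n A => Bf A n) n : Set ℕ) ∉ I := by
      induction n with
      | zero => exact hX
      | succ n ih => exact (hBf _ n ih).1
    exact (hBf _ n hpos).2.2

/-- Fast-growing interval endpoints dominating `f`. -/
def nnSeq (f : ℕ → ℕ) : ℕ → ℕ
  | 0 => 0
  | k + 1 => max (nnSeq f k + 1) ((Finset.range (nnSeq f k + 1)).sup f + 1)

lemma nnSeq_lt (f : ℕ → ℕ) (k : ℕ) : nnSeq f k < nnSeq f (k + 1) :=
  lt_of_lt_of_le (Nat.lt_succ_self _) (le_max_left _ _)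

lemma nnSeq_mono (f : ℕ → ℕ) : Monotone (nnSeq f) :=
  (strictMono_nat_of_lt_succ (nnSeq_lt f)).monotone

lemma nnSeq_f_lt (f : ℕ → ℕ) (k x : ℕ) (hx : x ≤ nnSeq f k) :
    f x < nnSeq f (k + 1) := by
  have h1 : f x ≤ (Finset.range (nnSeq f k + 1)).sup f :=
    Finset.le_sup (Finset.mem_range.2 (by omega))
  have h2 : (Finset.range (nnSeq f k + 1)).sup f + 1 ≤ nnSeq f (k + 1) :=
    le_max_right _ _
  omega

lemma nnSeq_cover (f : ℕ → ℕ) (m : ℕ) :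
    ∃ k, nnSeq f k ≤ m ∧ m < nnSeq f (k + 1) := by
  induction m with
  | zero => exact ⟨0, le_refl _, nnSeq_lt f 0⟩
  | succ m ih =>
    obtain ⟨k, h1, h2⟩ := ih
    by_cases h : m + 1 < nnSeq f (k + 1)
    · exact ⟨k, by omega, h⟩
    · have h3 := nnSeq_lt f (k + 1)
      exact ⟨k + 1, by omega, by omega⟩

end MathiasAux

/-- Mathias: every selective (p⁺ and q⁺) ideal is Ramsey. -/
theorem selective_is_ramsey (I : Set (Set ℕ)) (hI : IsIdeal I) (hfin : ContainsFin I)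
    (hp : Pplus I) (hq : Qplus I)
    (c : ℕ → ℕ → Bool) (hsym : ∀ x y, c x y = c y x)
    (X : Set ℕ) (hX : X ∉ I) :
    ∃ Y : Set ℕ, Y ∉ I ∧ Y ⊆ X ∧ ∃ b : Bool, ∀ x ∈ Y, ∀ y ∈ Y, x ≠ y → c x y = b := by
  classical
  obtain ⟨Y, bcol, hY0, hYpos, hYsub, hYhom⟩ := aux_seq hI c hX
  obtain ⟨B, hBpos, hBY⟩ := hp Y hYpos hYsub
  -- B ∩ X is positive
  have hBX : B ∩ X ∉ I := by
    have h0 : (B \ X).Finite := by have := hBY 0; rwa [hY0] at this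
    have hcov : B ⊆ (B \ X) ∪ (B ∩ X) := by
      intro x hx
      by_cases hxX : x ∈ X
      · exact Or.inr ⟨hx, hxX⟩
      · exact Or.inl ⟨hx, hxX⟩
    rcases aux_pos_union hI hBpos hcov with h' | h'
    · exact absurd (hfin _ h0) h'
    · exact h'
  -- choose the majority color
  obtain ⟨bstar, B', hB'pos, hB'sub, hB'col⟩ :
      ∃ (b : Bool) (B' : Set ℕ), B' ∉ I ∧ B' ⊆ B ∩ X ∧ ∀ x ∈ B', bcol x = b := by
    have hsplit : {x ∈ B ∩ X | bcol x = true} ∉ I ∨ {x ∈ B ∩ X | bcol x = false} ∉ I := by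
      apply aux_pos_union hI hBX
      intro x hx
      cases h : bcol x
      · exact Or.inr ⟨hx, h⟩
      · exact Or.inl ⟨hx, h⟩
    rcases hsplit with h | h
    · exact ⟨true, _, h, fun x hx => hx.1, fun x hx => hx.2⟩
    · exact ⟨false, _, h, fun x hx => hx.1, fun x hx => hx.2⟩
  -- bound function
  set f : ℕ → ℕ := fun x => (hBY (x + 1)).toFinset.sup id + 1 with hfdef
  have hfmem : ∀ x y, y ∈ B → f x ≤ y → y ∈ Y (x + 1) := by
    intro x y hyB hle
    by_contra hy
    have hmem : y ∈ (hBY (x + 1)).toFinset := (Set.Finite.mem_toFinset _).2 ⟨hyB, hy⟩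
    have hle2 : id y ≤ (hBY (x + 1)).toFinset.sup id := Finset.le_sup hmem
    simp only [id] at hle2
    have : f x = (hBY (x + 1)).toFinset.sup id + 1 := rfl
    omega
  choose idx hidx1 hidx2 using nnSeq_cover f
  have hmono : Monotone (nnSeq f) := nnSeq_mono f
  -- apply q⁺ to the interval partition of B'
  set F : ℕ → Set ℕ := fun k => B' ∩ Set.Ico (nnSeq f k) (nnSeq f (k + 1)) with hFdef
  have hFfin : ∀ k, (F k).Finite := fun k => (Set.finite_Ico _ _).subset fun x hx => hx.2
  have hFunion : (⋃ k, F k) = B' := by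
    ext x
    simp only [Set.mem_iUnion]
    constructor
    · rintro ⟨k, hk, -⟩; exact hk
    · intro hx; exact ⟨idx x, hx, Set.mem_Ico.2 ⟨hidx1 x, hidx2 x⟩⟩
  have hFdisj : ∀ m n, m ≠ n → F m ∩ F n = ∅ := by
    intro m n hmn
    ext x
    simp only [Set.mem_inter_iff, Set.mem_empty_iff_false, iff_false, not_and]
    rintro ⟨-, hm⟩ ⟨-, hn⟩
    rw [Set.mem_Ico] at hm hn
    rcases Nat.lt_or_ge m n with h | h
    · have := hmono (show m + 1 ≤ n from h); omega
    · have hlt : n < m := lt_of_le_of_ne h (Ne.symm hmn)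
      have := hmono (show n + 1 ≤ m from hlt); omega
  obtain ⟨S, hSpos, hSsub, hSsel⟩ := hq B' hB'pos F hFfin hFunion hFdisj
  -- parity split
  obtain ⟨p, T, hTpos, hTsub, hTpar⟩ :
      ∃ (p : ℕ) (T : Set ℕ), T ∉ I ∧ T ⊆ S ∧ ∀ x ∈ T, idx x % 2 = p := by
    have hpar : {x ∈ S | idx x % 2 = 0} ∉ I ∨ {x ∈ S | idx x % 2 = 1} ∉ I := by
      apply aux_pos_union hI hSpos
      intro x hx
      rcases Nat.mod_two_eq_zero_or_one (idx x) with h | h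
      · exact Or.inl ⟨hx, h⟩
      · exact Or.inr ⟨hx, h⟩
    rcases hpar with h | h
    · exact ⟨0, _, h, fun x hx => hx.1, fun x hx => hx.2⟩
    · exact ⟨1, _, h, fun x hx => hx.1, fun x hx => hx.2⟩
  -- the key monochromaticity claim
  have key : ∀ x ∈ T, ∀ y ∈ T, x < y → c x y = bstar := by
    intro x hx y hy hxy
    have hxS := hTsub hx
    have hyS := hTsub hy
    have hxB' := hSsub hxS
    have hyB' := hSsub hyS
    have hix1 := hidx1 x
    have hix2 := hidx2 x
    have hjy1 := hidx1 y
    have hjy2 := hidx2 y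
    have hij : idx x ≠ idx y := by
      intro h
      have hxF : x ∈ S ∩ F (idx x) := ⟨hxS, hxB', Set.mem_Ico.2 ⟨hix1, hix2⟩⟩
      have hyF : y ∈ S ∩ F (idx x) := ⟨hyS, hyB', Set.mem_Ico.2 ⟨h ▸ hjy1, h ▸ hjy2⟩⟩
      have := hSsel (idx x) hxF hyF
      omega
    have hij2 : idx x < idx y := by
      by_contra h
      have h1 : idx y + 1 ≤ idx x := by omega
      have := hmono h1
      omega
    have hpsame : idx x % 2 = idx y % 2 := by rw [hTpar x hx, hTpar y hy]
    have hij3 : idx x + 2 ≤ idx y := by omega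
    have hy2 : nnSeq f (idx x + 2) ≤ y := le_trans (hmono hij3) hjy1
    have hfx : f x < nnSeq f (idx x + 2) := nnSeq_f_lt f (idx x + 1) x (by omega)
    have hyY : y ∈ Y (x + 1) := hfmem x y (hB'sub hyB').1 (by omega)
    rw [hYhom x y hyY, hB'col x hxB']
  refine ⟨T, hTpos, fun x hx => (hB'sub (hSsub (hTsub hx))).2, bstar, ?_⟩
  intro x hx y hy hxy
  rcases Nat.lt_or_ge x y with h | h
  · exact key x hx y hy h
  · have h2 : y < x := lt_of_le_of_ne h (Ne.symm hxy)
    rw [hsym x y]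
    exact key y hy x hx h2
end

section
/- (Simon) Let I be an ideal on a countably infinite set X containing all finite sets. The following are equivalent: (i) I is Fréchet, i.e., for every A ∉ I there is an infinite B ⊆ A such that no infinite subset of B belongs to I; (ii) there is an almost disjoint family 𝒜 of infinite subsets of X such that I = 𝒜^⊥; (iii) there is a family 𝒜 of infinite subsets of X such that I = 𝒜^⊥. -/
open Set Filter Topology

/-- `I` is Fréchet: every `I`-positive set has an infinite subset all of whose
infinite subsets are `I`-positive. -/
def Frechet {X : Type*} (I : Set (Set X)) : Prop :=
  ∀ A : Set X, A ∉ I → ∃ B ⊆ A, B.Infinite ∧ ∀ C ⊆ B, C.Infinite → C ∉ I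

/-- The orthogonal of a family `𝒜`: sets meeting each member of `𝒜` in a finite set. -/
def Orth {X : Type*} (𝒜 : Set (Set X)) : Set (Set X) :=
  {E : Set X | ∀ A ∈ 𝒜, (E ∩ A).Finite}

/-- `𝒜` is an almost disjoint family. -/
def AlmostDisjoint {X : Type*} (𝒜 : Set (Set X)) : Prop :=
  ∀ A ∈ 𝒜, ∀ B ∈ 𝒜, A ≠ B → (A ∩ B).Finite

/-- (i) → (ii): a Fréchet ideal is the orthogonal of an almost disjoint family. -/
lemma frechet_to_ad {X : Type*} (I : Set (Set X)) (hI : IsIdeal I) (hF : Frechet I) :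
    ∃ 𝒜 : Set (Set X), (∀ A ∈ 𝒜, A.Infinite) ∧ AlmostDisjoint 𝒜 ∧ I = Orth 𝒜 := by
  obtain ⟨-, -, -, hdown⟩ := hI
  set Good : Set X → Prop := fun B => B.Infinite ∧ ∀ C ⊆ B, C.Infinite → C ∉ I with hGood
  set S : Set (Set (Set X)) := {𝒜 | (∀ B ∈ 𝒜, Good B) ∧ AlmostDisjoint 𝒜} with hS
  have hz : ∀ c ⊆ S, IsChain (· ⊆ ·) c → ∃ ub ∈ S, ∀ s ∈ c, s ⊆ ub := by
    intro c hcS hchain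
    refine ⟨⋃₀ c, ⟨?_, ?_⟩, fun s hs => subset_sUnion_of_mem hs⟩
    · rintro B ⟨𝒜, h𝒜, hB⟩
      exact (hcS h𝒜).1 B hB
    · rintro A ⟨𝒜₁, h𝒜₁, hA⟩ B ⟨𝒜₂, h𝒜₂, hB⟩ hne
      rcases hchain.total h𝒜₁ h𝒜₂ with h | h
      · exact (hcS h𝒜₂).2 A (h hA) B hB hne
      · exact (hcS h𝒜₁).2 A hA B (h hB) hne
  obtain ⟨𝒜, h𝒜S, hmax⟩ := zorn_subset S hz
  refine ⟨𝒜, fun A hA => (h𝒜S.1 A hA).1, h𝒜S.2, ?_⟩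
  ext E
  constructor
  · intro hE A hA
    by_contra hinf
    exact (h𝒜S.1 A hA).2 (E ∩ A) inter_subset_right hinf
      (hdown _ _ inter_subset_left hE)
  · intro hE
    by_contra hEI
    obtain ⟨B, hBE, hBinf, hBgood⟩ := hF E hEI
    have hBnot : B ∉ 𝒜 := by
      intro hB
      have := hE B hB
      rw [inter_eq_self_of_subset_right hBE] at this
      exact hBinf this
    have hins : insert B 𝒜 ∈ S := by
      constructor
      · rintro C (rfl | hC)
        · exact ⟨hBinf, hBgood⟩
        · exact h𝒜S.1 C hC
      · rintro C (rfl | hC) D (rfl | hD) hne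
        · exact absurd rfl hne
        · exact (hE D hD).subset (inter_subset_inter_left _ hBE)
        · exact (hE C hC).subset (fun x hx => ⟨hBE hx.2, hx.1⟩)
        · exact h𝒜S.2 C hC D hD hne
    have h1 : insert B 𝒜 ⊆ 𝒜 := hmax hins (subset_insert _ _)
    exact hBnot (h1 (mem_insert _ _))

/-- (iii) → (i). -/
lemma orth_to_frechet {X : Type*} (I : Set (Set X)) (𝒜 : Set (Set X))
    (hinf : ∀ A ∈ 𝒜, A.Infinite) (hEq : I = Orth 𝒜) : Frechet I := by
  intro A hA
  rw [hEq] at hA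
  simp only [Orth, mem_setOf_eq, not_forall] at hA
  obtain ⟨A₀, hA₀, hAA₀⟩ := hA
  refine ⟨A ∩ A₀, inter_subset_left, hAA₀, ?_⟩
  intro C hC hCinf
  rw [hEq]
  intro hCorth
  have := hCorth A₀ hA₀
  rw [inter_eq_self_of_subset_left (hC.trans inter_subset_right)] at this
  exact hCinf this

/-- Simon: for an ideal `I` on a countably infinite set `X`, TFAE:
(i) `I` is Fréchet; (ii) `I = 𝒜^⊥` for an almost disjoint family `𝒜` of infinite
sets; (iii) `I = 𝒜^⊥` for a family `𝒜` of infinite sets. -/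
theorem frechet_iff_orthogonal {X : Type*} [Countable X] [Infinite X]
    (I : Set (Set X)) (hI : IsIdeal I) (hfin : ContainsFin I) :
    (Frechet I ↔ ∃ 𝒜 : Set (Set X), (∀ A ∈ 𝒜, A.Infinite) ∧ AlmostDisjoint 𝒜 ∧
      I = Orth 𝒜) ∧
    (Frechet I ↔ ∃ 𝒜 : Set (Set X), (∀ A ∈ 𝒜, A.Infinite) ∧ I = Orth 𝒜) := by
  constructor
  · constructor
    · exact frechet_to_ad I hI
    · rintro ⟨𝒜, h1, _, h3⟩
      exact orth_to_frechet I 𝒜 h1 h3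
  · constructor
    · intro hF
      obtain ⟨𝒜, h1, _, h3⟩ := frechet_to_ad I hI hF
      exact ⟨𝒜, h1, h3⟩
    · rintro ⟨𝒜, h1, h3⟩
      exact orth_to_frechet I 𝒜 h1 h3
end
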